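/- arXiv:1407.2264 — 2 statements merged into one kernel-verified Lean document; each statement's English description precedes it below -/
import Mathlib

section
/- For $k, n \in \mathbb{N}$ with $1 \le k < n$ and constants $c_k, c_n \ne 0$, consider the planar region $R_{k,n} = \{(x,y) : 0 \le x/c_k \le 1 \text{ and } (x/c_k)^{(n/k)^2} \le y/c_n \le 1 - (1 - x/c_k)^{(n/k)^2}\}$ (interpreting inequalities after normalizing by the signs of $c_k, c_n$). Then $R_{k,n}$ is invariant under both maps $T^1_t(x,y) = (e^{-\beta_k t}x,\, e^{-\beta_n t}y)$ and $T^0_t(x,y) = (c_k + e^{-\beta_k t}(x - c_k),\, c_n + e^{-\beta_n t}(y - c_n))$ for all $t \ge 0$, where $\beta_j = D(j\pi/L)^2$ so that $\beta_n/\beta_k = (n/k)^2$. -/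
open Real Set

lemma key_mono (q : ℝ) (hq : 1 ≤ q) {s : ℝ} (hs : 0 ≤ s) :
    MonotoneOn (fun x : ℝ => (x + s) ^ q - x ^ q) (Ici 0) := by
  have hq0 : (0:ℝ) ≤ q := by linarith
  apply monotoneOn_of_deriv_nonneg (convex_Ici 0)
  · apply ContinuousOn.sub
    · exact ((Real.continuous_rpow_const hq0).comp (continuous_id.add continuous_const)).continuousOn
    · exact (Real.continuous_rpow_const hq0).continuousOn
  · intro x hx
    have h1 : HasDerivAt (fun x : ℝ => (x + s) ^ q - x ^ q)
        (q * (x + s) ^ (q - 1) * 1 - q * x ^ (q - 1)) x :=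
      ((Real.hasDerivAt_rpow_const (Or.inr hq)).comp x
        ((hasDerivAt_id x).add_const s)).sub (Real.hasDerivAt_rpow_const (Or.inr hq))
    exact h1.differentiableAt.differentiableWithinAt
  · intro x hx
    simp only [interior_Ici, mem_Ioi] at hx
    have h1 : HasDerivAt (fun x : ℝ => (x + s) ^ q - x ^ q)
        (q * (x + s) ^ (q - 1) * 1 - q * x ^ (q - 1)) x :=
      ((Real.hasDerivAt_rpow_const (Or.inr hq)).comp x
        ((hasDerivAt_id x).add_const s)).sub (Real.hasDerivAt_rpow_const (Or.inr hq))
    rw [h1.deriv]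
    have : x ^ (q-1) ≤ (x + s) ^ (q-1) :=
      Real.rpow_le_rpow hx.le (by linarith) (by linarith)
    nlinarith

lemma key_ineq (q : ℝ) (hq : 1 ≤ q) {s a : ℝ} (hs : 0 ≤ s) (hsa : s ≤ a) (ha : a ≤ 1) :
    a ^ q - (a - s) ^ q ≤ 1 - (1 - s) ^ q := by
  have h := key_mono q hq hs (s := s) (mem_Ici.2 (by linarith : (0:ℝ) ≤ a - s))
    (mem_Ici.2 (by linarith : (0:ℝ) ≤ 1 - s)) (by linarith)
  simp only [sub_add_cancel] at h
  rw [Real.one_rpow] at h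
  linarith

lemma step (q a u v : ℝ) (hq : 1 ≤ q) (ha0 : 0 < a) (ha1 : a ≤ 1)
    (hu0 : 0 ≤ u) (hu1 : u ≤ 1) (hv1 : u ^ q ≤ v) (hv2 : v ≤ 1 - (1 - u) ^ q) :
    (0 ≤ a * u ∧ a * u ≤ 1 ∧ (a * u) ^ q ≤ a ^ q * v ∧
      a ^ q * v ≤ 1 - (1 - a * u) ^ q) ∧
    (0 ≤ 1 - a * (1 - u) ∧ 1 - a * (1 - u) ≤ 1 ∧
      (1 - a * (1 - u)) ^ q ≤ 1 - a ^ q * (1 - v) ∧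
      1 - a ^ q * (1 - v) ≤ 1 - (1 - (1 - a * (1 - u))) ^ q) := by
  have haq0 : 0 < a ^ q := Real.rpow_pos_of_pos ha0 q
  have haq1 : a ^ q ≤ 1 := Real.rpow_le_one ha0.le ha1 (by linarith)
  have hw0 : 0 ≤ 1 - u := by linarith
  have hwq0 : (0:ℝ) ≤ (1 - u) ^ q := Real.rpow_nonneg hw0 q
  have huq0 : (0:ℝ) ≤ u ^ q := Real.rpow_nonneg hu0 q
  have hmul : (a * u) ^ q = a ^ q * u ^ q := Real.mul_rpow ha0.le hu0
  have hmulw : (a * (1 - u)) ^ q = a ^ q * (1 - u) ^ q := Real.mul_rpow ha0.le hw0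
  refine ⟨⟨mul_nonneg ha0.le hu0, by nlinarith, by nlinarith, ?_⟩,
    ⟨by nlinarith, by nlinarith, ?_, ?_⟩⟩
  · -- a^q * v ≤ 1 - (1 - a*u)^q
    have hkey := key_ineq q hq (s := a * u) (a := a)
      (mul_nonneg ha0.le hu0) (by nlinarith) ha1
    have : a - a * u = a * (1 - u) := by ring
    rw [this, hmulw] at hkey
    nlinarith
  · -- (1 - a*(1-u))^q ≤ 1 - a^q * (1-v)
    have hkey := key_ineq q hq (s := a * (1 - u)) (a := a)
      (mul_nonneg ha0.le hw0) (by nlinarith) ha1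
    have : a - a * (1 - u) = a * u := by ring
    rw [this, hmul] at hkey
    nlinarith
  · -- 1 - a^q*(1-v) ≤ 1 - (1 - (1 - a*(1-u)))^q
    have : 1 - (1 - a * (1 - u)) = a * (1 - u) := by ring
    rw [this, hmulw]
    nlinarith

/-- Invariance of the region
`R = {(x,y) : 0 ≤ x/cₖ ≤ 1, (x/cₖ)^{(n/k)²} ≤ y/cₙ ≤ 1 - (1 - x/cₖ)^{(n/k)²}}`
under the Fourier-mode projections of the two heat semigroup dynamics:
decay toward `0` and decay toward `(cₖ, cₙ)`. -/
theorem fourier_mode_region_invariant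
    (D L : ℝ) (hD : 0 < D) (hL : 0 < L)
    (k n : ℕ) (hk : 1 ≤ k) (hkn : k < n)
    (ck cn : ℝ) (hck : ck ≠ 0) (hcn : cn ≠ 0)
    (β : ℕ → ℝ) (hβ : ∀ j, β j = D * ((j : ℝ) * π / L) ^ 2)
    (q : ℝ) (hq : q = ((n : ℝ) / (k : ℝ)) ^ 2)
    (R : Set (ℝ × ℝ))
    (hR : R = {p : ℝ × ℝ |
      0 ≤ p.1 / ck ∧ p.1 / ck ≤ 1 ∧
      (p.1 / ck) ^ q ≤ p.2 / cn ∧ p.2 / cn ≤ 1 - (1 - p.1 / ck) ^ q}) :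
    ∀ t : ℝ, 0 ≤ t →
      Set.MapsTo (fun p : ℝ × ℝ =>
        (Real.exp (-β k * t) * p.1, Real.exp (-β n * t) * p.2)) R R ∧
      Set.MapsTo (fun p : ℝ × ℝ =>
        (ck + Real.exp (-β k * t) * (p.1 - ck),
         cn + Real.exp (-β n * t) * (p.2 - cn))) R R := by
  intro t ht
  have hk0 : (0:ℝ) < (k:ℝ) := by exact_mod_cast hk
  have hkn' : (k:ℝ) < (n:ℝ) := by exact_mod_cast hkn
  have hq1 : 1 ≤ q := by
    rw [hq]
    have : 1 ≤ (n:ℝ) / (k:ℝ) := (one_le_div hk0).2 hkn'.le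
    nlinarith
  have hβk0 : 0 ≤ β k := by
    rw [hβ]; positivity
  have hβnk : β n = β k * q := by
    rw [hβ, hβ, hq]
    field_simp
  set a : ℝ := Real.exp (-β k * t) with ha_def
  have ha0 : 0 < a := Real.exp_pos _
  have ha1 : a ≤ 1 := Real.exp_le_one_iff.2 (by nlinarith)
  have haq : Real.exp (-β n * t) = a ^ q := by
    rw [ha_def, ← Real.exp_mul, hβnk]; ring_nf
  constructor <;> intro p hp <;>
    (rw [hR] at hp; obtain ⟨h1, h2, h3, h4⟩ := hp) <;>
    obtain ⟨⟨s1, s2, s3, s4⟩, ⟨r1, r2, r3, r4⟩⟩ :=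
      step q a (p.1 / ck) (p.2 / cn) hq1 ha0 ha1 h1 h2 h3 h4
  · rw [hR]
    refine ⟨?_, ?_, ?_, ?_⟩ <;>
      simp only [mul_div_assoc, haq] <;> assumption
  · rw [hR]
    have e1 : (ck + a * (p.1 - ck)) / ck = 1 - a * (1 - p.1 / ck) := by
      field_simp
      ring
    have e2 : (cn + Real.exp (-β n * t) * (p.2 - cn)) / cn = 1 - a ^ q * (1 - p.2 / cn) := by
      rw [haq]
      field_simp
      ring
    exact ⟨by rw [e1]; exact r1, by rw [e1]; exact r2,
      by rw [e1, e2]; exact r3, by rw [e1, e2]; exact r4⟩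
end

section
/- Let $\beta_m, \beta_n, r_0, r_1 > 0$ and let $\tau_0, \tau_1$ be independent exponential random variables with rates $r_0, r_1$. Suppose real random variables $(Z_m, Z_n)$, independent of $(\tau_0,\tau_1)$, satisfy the distributional fixed-point equation $(Z_m, Z_n) =_d \big(e^{-\beta_m\tau_0}(e^{-\beta_m\tau_1}Z_m - c_m) + c_m,\ e^{-\beta_n\tau_0}(e^{-\beta_n\tau_1}Z_n - c_n) + c_n\big)$ and have finite second moments. Then $\mathbb{E}[Z_m Z_n] = \frac{(\beta_m + \beta_n + r_1)\big((\beta_m+\beta_n)(\beta_m+r_1)(\beta_n+r_1) + (2\beta_m\beta_n + (\beta_m+\beta_n)r_1)r_0\big)}{(\beta_m+\beta_n)(\beta_m + r_1 + r_0)(\beta_n + r_1 + r_0)(\beta_m + \beta_n + r_1 + r_0)}\, c_m c_n$, where additionally the marginal fixed points give $\mathbb{E} Z_j = \frac{(r_1+\beta_j)}{(r_0+r_1+\beta_j)} c_j$. -/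
/-!
By independence, every moment of the image of `(Z_m, Z_n)` under the random map is a moment of
`(Z_m, Z_n)` times Laplace transforms `E e^{-l τᵢ} = rᵢ / (rᵢ + l)` of the clocks. Centred at its
target, the map multiplies `e^{-β_j τ₁} Z_j - c_j` by `e^{-β_j τ₀}`, so equality in law yields a
linear equation for each mean `E Z_j` and then, the means being known, one for `E[Z_m Z_n]`.
Products of Laplace transforms at a positive argument are `< 1`, so each equation has a unique
solution.
-/

open MeasureTheory ProbabilityTheory Real

lemma exponentialPDFReal_eq_ite (r x : ℝ) :
    exponentialPDFReal r x = if 0 ≤ x then r * exp (-(r * x)) else 0 := by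
  simp only [exponentialPDFReal, gammaPDFReal, rpow_one, Gamma_one, div_one, sub_self, rpow_zero,
    mul_one]

lemma exponentialPDFReal_mul_exp_neg_mul {r l : ℝ} (hrl : r + l ≠ 0) (x : ℝ) :
    exponentialPDFReal r x * exp (-l * x) = r / (r + l) * exponentialPDFReal (r + l) x := by
  rw [exponentialPDFReal_eq_ite, exponentialPDFReal_eq_ite]
  split_ifs
  · rw [mul_assoc, ← exp_add, show -(r * x) + -l * x = -((r + l) * x) by ring]
    field_simp
  · simp

lemma integral_expMeasure {r : ℝ} (hr : 0 < r) (g : ℝ → ℝ) :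
    ∫ x, g x ∂expMeasure r = ∫ x, exponentialPDFReal r x * g x := by
  rw [expMeasure, gammaMeasure, integral_withDensity_eq_integral_toReal_smul (f := gammaPDF 1 r)
    (measurable_gammaPDFReal 1 r).ennreal_ofReal (ae_of_all _ fun _ => ENNReal.ofReal_lt_top)]
  simp only [gammaPDF, ENNReal.toReal_ofReal (gammaPDFReal_nonneg one_pos hr _), smul_eq_mul,
    exponentialPDFReal]

lemma integral_exponentialPDFReal {r : ℝ} (hr : 0 < r) : ∫ x, exponentialPDFReal r x = 1 := by
  have := isProbabilityMeasure_expMeasure hr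
  simpa using (integral_expMeasure hr fun _ => 1).symm

lemma integral_exp_neg_mul_expMeasure {r l : ℝ} (hr : 0 < r) (hrl : 0 < r + l) :
    ∫ x, exp (-l * x) ∂expMeasure r = r / (r + l) := by
  simp_rw [integral_expMeasure hr, exponentialPDFReal_mul_exp_neg_mul hrl.ne', integral_const_mul,
    integral_exponentialPDFReal hrl, mul_one]

lemma expMeasure_Iio_zero (r : ℝ) : expMeasure r (Set.Iio 0) = 0 := by
  rw [expMeasure, gammaMeasure, withDensity_apply _ measurableSet_Iio]
  exact lintegral_gammaPDF_of_nonpos le_rfl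

lemma integral_sub_mul_sub {Ω : Type*} [MeasurableSpace Ω] {P : Measure Ω}
    [IsProbabilityMeasure P] {X Y : Ω → ℝ} (hX : Integrable X P) (hY : Integrable Y P)
    (hXY : Integrable (fun ω => X ω * Y ω) P) (a b : ℝ) :
    ∫ ω, (X ω - a) * (Y ω - b) ∂P =
      ∫ ω, X ω * Y ω ∂P - b * ∫ ω, X ω ∂P - a * ∫ ω, Y ω ∂P + a * b := by
  have hexpand (ω : Ω) : (X ω - a) * (Y ω - b) = X ω * Y ω - b * X ω - a * Y ω + a * b := by ring
  simp_rw [hexpand]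
  rw [integral_add ((hXY.sub' (hX.const_mul b)).sub' (hY.const_mul a)) (integrable_const _),
    integral_sub (hXY.sub' (hX.const_mul b)) (hY.const_mul a), integral_sub hXY (hX.const_mul b),
    integral_const_mul, integral_const_mul, integral_const, probReal_univ, one_smul]

section ExponentialVariable

variable {Ω : Type*} [MeasurableSpace Ω] {P : Measure Ω} {τ : Ω → ℝ} {r : ℝ}

lemma ae_nonneg_of_map_eq_expMeasure (hτ : AEMeasurable τ P) (h : P.map τ = expMeasure r) :
    ∀ᵐ ω ∂P, 0 ≤ τ ω := by
  have : P (τ ⁻¹' Set.Iio 0) = 0 := by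
    rw [← Measure.map_apply_of_aemeasurable hτ measurableSet_Iio, h, expMeasure_Iio_zero]
  simp only [ae_iff, not_le]
  exact this

lemma integral_exp_neg_mul_of_map_eq_expMeasure (hr : 0 < r) (hτ : AEMeasurable τ P)
    (h : P.map τ = expMeasure r) {l : ℝ} (hrl : 0 < r + l) :
    ∫ ω, exp (-l * τ ω) ∂P = r / (r + l) := by
  rw [← integral_exp_neg_mul_expMeasure hr hrl, ← h, integral_map hτ (by fun_prop)]

lemma MeasureTheory.Integrable.exp_neg_mul_mul {f : Ω → ℝ} (hf : Integrable f P)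
    (hτ : AEMeasurable τ P) (hτ_nonneg : ∀ᵐ ω ∂P, 0 ≤ τ ω) {l : ℝ} (hl : 0 ≤ l) :
    Integrable (fun ω => exp (-l * τ ω) * f ω) P := by
  refine hf.bdd_mul (c := 1) (by fun_prop) ?_
  filter_upwards [hτ_nonneg] with ω hω
  rw [norm_of_nonneg (exp_pos _).le, exp_le_one_iff]
  nlinarith

end ExponentialVariable

section ExponentialClocks

variable {Ω : Type*} [MeasurableSpace Ω] {P : Measure Ω} {τ₀ τ₁ : Ω → ℝ} {r₀ r₁ : ℝ}

lemma integral_exp_neg_mul_mul_exp_neg_mul_mul {Y : Ω → ℝ} (hr₀ : 0 < r₀) (hr₁ : 0 < r₁)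
    (hτ₀ : AEMeasurable τ₀ P) (hτ₁ : AEMeasurable τ₁ P)
    (h₀ : P.map τ₀ = expMeasure r₀) (h₁ : P.map τ₁ = expMeasure r₁) (hτ : IndepFun τ₀ τ₁ P)
    (hY : AEStronglyMeasurable Y P) (hYτ : IndepFun Y (fun ω => (τ₀ ω, τ₁ ω)) P)
    {a b : ℝ} (ha : 0 < r₀ + a) (hb : 0 < r₁ + b) :
    ∫ ω, exp (-a * τ₀ ω) * (exp (-b * τ₁ ω) * Y ω) ∂P =
      r₀ / (r₀ + a) * (r₁ / (r₁ + b)) * ∫ ω, Y ω ∂P := by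
  have hexp : IndepFun (fun ω => exp (-a * τ₀ ω)) (fun ω => exp (-b * τ₁ ω)) P :=
    hτ.comp (by fun_prop : Measurable fun t => exp (-a * t))
      (by fun_prop : Measurable fun t => exp (-b * t))
  have hexpY : IndepFun (fun ω => exp (-a * τ₀ ω) * exp (-b * τ₁ ω)) Y P :=
    (hYτ.comp measurable_id
      (by fun_prop : Measurable fun p : ℝ × ℝ => exp (-a * p.1) * exp (-b * p.2))).symm
  simp_rw [← mul_assoc]
  rw [hexpY.integral_fun_mul_eq_mul_integral (by fun_prop) hY,
    hexp.integral_fun_mul_eq_mul_integral (by fun_prop) (by fun_prop),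
    integral_exp_neg_mul_of_map_eq_expMeasure hr₀ hτ₀ h₀ ha,
    integral_exp_neg_mul_of_map_eq_expMeasure hr₁ hτ₁ h₁ hb]

lemma integral_exp_neg_mul_mul_sub_add [IsProbabilityMeasure P] {X : Ω → ℝ} (hr₀ : 0 < r₀)
    (hr₁ : 0 < r₁) (hτ₀ : AEMeasurable τ₀ P) (hτ₁ : AEMeasurable τ₁ P)
    (h₀ : P.map τ₀ = expMeasure r₀) (h₁ : P.map τ₁ = expMeasure r₁) (hτ : IndepFun τ₀ τ₁ P)
    (hX : Integrable X P) (hXτ : IndepFun X (fun ω => (τ₀ ω, τ₁ ω)) P) {β c : ℝ} (hβ : 0 ≤ β) :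
    ∫ ω, exp (-β * τ₀ ω) * (exp (-β * τ₁ ω) * X ω - c) + c ∂P =
      r₀ / (r₀ + β) * (r₁ / (r₁ + β) * ∫ ω, X ω ∂P - c) + c := by
  have h₀' := ae_nonneg_of_map_eq_expMeasure hτ₀ h₀
  have h₁' := ae_nonneg_of_map_eq_expMeasure hτ₁ h₁
  have hdecay := (hX.exp_neg_mul_mul hτ₁ h₁' hβ).exp_neg_mul_mul hτ₀ h₀' hβ
  have hconst := (integrable_const c).exp_neg_mul_mul hτ₀ h₀' hβ
  simp_rw [mul_sub]
  rw [integral_add (hdecay.sub' hconst) (integrable_const c), integral_sub hdecay hconst,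
    integral_mul_const, integral_const, probReal_univ, one_smul,
    integral_exp_neg_mul_mul_exp_neg_mul_mul hr₀ hr₁ hτ₀ hτ₁ h₀ h₁ hτ hX.1 hXτ (by linarith)
      (by linarith),
    integral_exp_neg_mul_of_map_eq_expMeasure hr₀ hτ₀ h₀ (by linarith)]
  ring

lemma integral_exp_neg_mul_mul_sub_mul_exp_neg_mul_mul_sub [IsFiniteMeasure P] {X Y : Ω → ℝ}
    (hr₀ : 0 < r₀) (hr₁ : 0 < r₁) (hτ₀ : AEMeasurable τ₀ P) (hτ₁ : AEMeasurable τ₁ P)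
    (h₀ : P.map τ₀ = expMeasure r₀) (h₁ : P.map τ₁ = expMeasure r₁) (hτ : IndepFun τ₀ τ₁ P)
    (hX : MemLp X 2 P) (hY : MemLp Y 2 P)
    (hXYτ : IndepFun (fun ω => (X ω, Y ω)) (fun ω => (τ₀ ω, τ₁ ω)) P)
    {βm βn cm cn : ℝ} (hβm : 0 ≤ βm) (hβn : 0 ≤ βn) :
    ∫ ω, exp (-βm * τ₀ ω) * (exp (-βm * τ₁ ω) * X ω - cm) *
        (exp (-βn * τ₀ ω) * (exp (-βn * τ₁ ω) * Y ω - cn)) ∂P =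
      r₀ / (r₀ + (βm + βn)) * (r₁ / (r₁ + (βm + βn)) * ∫ ω, X ω * Y ω ∂P
        - cn * (r₁ / (r₁ + βm) * ∫ ω, X ω ∂P) - cm * (r₁ / (r₁ + βn) * ∫ ω, Y ω ∂P)
        + cm * cn) := by
  have hsplit (t : ℝ) : exp (-(βm + βn) * t) = exp (-βm * t) * exp (-βn * t) := by
    rw [← exp_add]; ring_nf
  have hexpand (ω : Ω) :
      exp (-βm * τ₀ ω) * (exp (-βm * τ₁ ω) * X ω - cm) *
        (exp (-βn * τ₀ ω) * (exp (-βn * τ₁ ω) * Y ω - cn)) =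
      exp (-(βm + βn) * τ₀ ω) * (exp (-(βm + βn) * τ₁ ω) * (X ω * Y ω))
        - cn * (exp (-(βm + βn) * τ₀ ω) * (exp (-βm * τ₁ ω) * X ω))
        - cm * (exp (-(βm + βn) * τ₀ ω) * (exp (-βn * τ₁ ω) * Y ω))
        + exp (-(βm + βn) * τ₀ ω) * (cm * cn) := by
    rw [hsplit, hsplit]; ring
  have h₀' := ae_nonneg_of_map_eq_expMeasure hτ₀ h₀
  have h₁' := ae_nonneg_of_map_eq_expMeasure hτ₁ h₁
  have hβ : 0 ≤ βm + βn := add_nonneg hβm hβn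
  have hX1 := hX.integrable one_le_two
  have hY1 := hY.integrable one_le_two
  have hXY1 : Integrable (fun ω => X ω * Y ω) P := hX.integrable_mul hY
  have hdecay {Z : Ω → ℝ} (hZ : Integrable Z P) {a b : ℝ} (ha : 0 ≤ a) (hb : 0 ≤ b) :
      Integrable (fun ω => exp (-a * τ₀ ω) * (exp (-b * τ₁ ω) * Z ω)) P :=
    (hZ.exp_neg_mul_mul hτ₁ h₁' hb).exp_neg_mul_mul hτ₀ h₀' ha
  have hfactor {Z : Ω → ℝ} (hZ : Integrable Z P) (hZτ : IndepFun Z (fun ω => (τ₀ ω, τ₁ ω)) P)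
      {b : ℝ} (hb : 0 ≤ b) :=
    integral_exp_neg_mul_mul_exp_neg_mul_mul hr₀ hr₁ hτ₀ hτ₁ h₀ h₁ hτ hZ.1 hZτ
      (a := βm + βn) (b := b) (by linarith) (by linarith)
  simp_rw [hexpand]
  rw [integral_add (((hdecay hXY1 hβ hβ).sub' ((hdecay hX1 hβ hβm).const_mul cn)).sub'
      ((hdecay hY1 hβ hβn).const_mul cm)) ((integrable_const _).exp_neg_mul_mul hτ₀ h₀' hβ),
    integral_sub ((hdecay hXY1 hβ hβ).sub' ((hdecay hX1 hβ hβm).const_mul cn))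
      ((hdecay hY1 hβ hβn).const_mul cm),
    integral_sub (hdecay hXY1 hβ hβ) ((hdecay hX1 hβ hβm).const_mul cn),
    integral_const_mul, integral_const_mul, integral_mul_const,
    hfactor hXY1 (hXYτ.comp (measurable_fst.mul measurable_snd) measurable_id) hβ,
    hfactor hX1 (hXYτ.comp measurable_fst measurable_id) hβm,
    hfactor hY1 (hXYτ.comp measurable_snd measurable_id) hβn,
    integral_exp_neg_mul_of_map_eq_expMeasure hr₀ hτ₀ h₀ (by linarith)]
  ring

end ExponentialClocks

lemma stationary_mean_eq {r₀ r₁ β c m : ℝ} (hr₀ : 0 < r₀) (hr₁ : 0 < r₁) (hβ : 0 < β)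
    (h : m = r₀ / (r₀ + β) * (r₁ / (r₁ + β) * m - c) + c) :
    m = (r₁ + β) / (r₀ + r₁ + β) * c := by
  field_simp at h ⊢
  have hfactored : β * (m * (r₀ + r₁ + β) - c * (r₁ + β)) = 0 := by linear_combination h
  linear_combination (mul_eq_zero.mp hfactored).resolve_left hβ.ne'

lemma stationary_mixed_moment_eq {r₀ r₁ βm βn cm cn m n C : ℝ} (hr₀ : 0 < r₀) (hr₁ : 0 < r₁)
    (hβm : 0 < βm) (hβn : 0 < βn)
    (hm : m = (r₁ + βm) / (r₀ + r₁ + βm) * cm) (hn : n = (r₁ + βn) / (r₀ + r₁ + βn) * cn)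
    (hC : C - cn * m - cm * n + cm * cn = r₀ / (r₀ + (βm + βn)) * (r₁ / (r₁ + (βm + βn)) * C
        - cn * (r₁ / (r₁ + βm) * m) - cm * (r₁ / (r₁ + βn) * n) + cm * cn)) :
    C = (βm + βn + r₁) * ((βm + βn) * (βm + r₁) * (βn + r₁) +
          (2 * βm * βn + (βm + βn) * r₁) * r₀) /
      ((βm + βn) * (βm + r₁ + r₀) * (βn + r₁ + r₀) * (βm + βn + r₁ + r₀)) * (cm * cn) := by
  subst hm hn
  field_simp at hC ⊢
  linear_combination hC

theorem stationary_fourier_covariance_general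
    {Ω : Type*} [MeasurableSpace Ω] (P : Measure Ω) [IsProbabilityMeasure P]
    (βm βn r0 r1 cm cn : ℝ)
    (hβm : 0 < βm) (hβn : 0 < βn) (hr0 : 0 < r0) (hr1 : 0 < r1)
    (τ0 τ1 Zm Zn : Ω → ℝ)
    (hτ0meas : Measurable τ0) (hτ1meas : Measurable τ1)
    (hτ0 : Measure.map τ0 P = expMeasure r0)
    (hτ1 : Measure.map τ1 P = expMeasure r1)
    (hττ : IndepFun τ0 τ1 P)
    (hZτ : IndepFun (fun ω => (Zm ω, Zn ω)) (fun ω => (τ0 ω, τ1 ω)) P)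
    (hZm2 : MemLp Zm 2 P) (hZn2 : MemLp Zn 2 P)
    (hfix : Measure.map (fun ω => (Zm ω, Zn ω)) P =
      Measure.map (fun ω =>
        (Real.exp (-βm * τ0 ω) * (Real.exp (-βm * τ1 ω) * Zm ω - cm) + cm,
         Real.exp (-βn * τ0 ω) * (Real.exp (-βn * τ1 ω) * Zn ω - cn) + cn)) P) :
    (∫ ω, Zm ω * Zn ω ∂P =
      (βm + βn + r1) *
        ((βm + βn) * (βm + r1) * (βn + r1) +
          (2 * βm * βn + (βm + βn) * r1) * r0) /
      ((βm + βn) * (βm + r1 + r0) * (βn + r1 + r0) * (βm + βn + r1 + r0)) *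
        (cm * cn)) ∧
    (∫ ω, Zm ω ∂P = (r1 + βm) / (r0 + r1 + βm) * cm) ∧
    (∫ ω, Zn ω ∂P = (r1 + βn) / (r0 + r1 + βn) * cn) := by
  have hZm := hZm2.integrable one_le_two
  have hZn := hZn2.integrable one_le_two
  have hZm_ae := hZm.1.aemeasurable
  have hZn_ae := hZn.1.aemeasurable
  have hlaw : IdentDistrib (fun ω => (Zm ω, Zn ω))
      (fun ω => (exp (-βm * τ0 ω) * (exp (-βm * τ1 ω) * Zm ω - cm) + cm,
        exp (-βn * τ0 ω) * (exp (-βn * τ1 ω) * Zn ω - cn) + cn)) P P :=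
    ⟨by fun_prop, by fun_prop, hfix⟩
  have hmean_m := (hlaw.comp measurable_fst).integral_eq.trans
    (integral_exp_neg_mul_mul_sub_add hr0 hr1 hτ0meas.aemeasurable hτ1meas.aemeasurable hτ0 hτ1
      hττ hZm (hZτ.comp measurable_fst measurable_id) hβm.le)
  have hmean_n := (hlaw.comp measurable_snd).integral_eq.trans
    (integral_exp_neg_mul_mul_sub_add hr0 hr1 hτ0meas.aemeasurable hτ1meas.aemeasurable hτ0 hτ1
      hττ hZn (hZτ.comp measurable_snd measurable_id) hβn.le)
  have hm := stationary_mean_eq hr0 hr1 hβm hmean_m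
  have hn := stationary_mean_eq hr0 hr1 hβn hmean_n
  have hcov := (hlaw.comp (u := fun p : ℝ × ℝ => (p.1 - cm) * (p.2 - cn))
    (by fun_prop)).integral_eq
  simp only [Function.comp_apply, add_sub_cancel_right] at hcov
  rw [integral_sub_mul_sub hZm hZn (hZm2.integrable_mul hZn2),
    integral_exp_neg_mul_mul_sub_mul_exp_neg_mul_mul_sub hr0 hr1 hτ0meas.aemeasurable
      hτ1meas.aemeasurable hτ0 hτ1 hττ hZm2 hZn2 hZτ hβm.le hβn.le] at hcov
  exact ⟨stationary_mixed_moment_eq hr0 hr1 hβm hβn hm hn hcov, hm, hn⟩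

/-- Joint second moment of the stationary Fourier coefficients:
if `(Z_m, Z_n)` satisfies the distributional fixed-point equation
`(Z_m, Z_n) =_d (e^{-β_m τ₀}(e^{-β_m τ₁} Z_m - c_m) + c_m, …)` with `τ₀, τ₁`
independent exponentials of rates `r₀, r₁`, independent of `(Z_m, Z_n)`, then
`E[Z_m Z_n]` and the marginal means are given by the stated closed formulas. -/
theorem stationary_fourier_covariance
    {Ω : Type*} [MeasurableSpace Ω] (P : Measure Ω) [IsProbabilityMeasure P]
    (βm βn r0 r1 cm cn : ℝ)
    (hβm : 0 < βm) (hβn : 0 < βn) (hr0 : 0 < r0) (hr1 : 0 < r1)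
    (τ0 τ1 Zm Zn : Ω → ℝ)
    (hτ0meas : Measurable τ0) (hτ1meas : Measurable τ1)
    (hZmmeas : Measurable Zm) (hZnmeas : Measurable Zn)
    (hτ0 : Measure.map τ0 P = expMeasure r0)
    (hτ1 : Measure.map τ1 P = expMeasure r1)
    (hττ : IndepFun τ0 τ1 P)
    (hZτ : IndepFun (fun ω => (Zm ω, Zn ω)) (fun ω => (τ0 ω, τ1 ω)) P)
    (hZm2 : MemLp Zm 2 P) (hZn2 : MemLp Zn 2 P)
    (hfix : Measure.map (fun ω => (Zm ω, Zn ω)) P =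
      Measure.map (fun ω =>
        (Real.exp (-βm * τ0 ω) * (Real.exp (-βm * τ1 ω) * Zm ω - cm) + cm,
         Real.exp (-βn * τ0 ω) * (Real.exp (-βn * τ1 ω) * Zn ω - cn) + cn)) P) :
    (∫ ω, Zm ω * Zn ω ∂P =
      (βm + βn + r1) *
        ((βm + βn) * (βm + r1) * (βn + r1) +
          (2 * βm * βn + (βm + βn) * r1) * r0) /
      ((βm + βn) * (βm + r1 + r0) * (βn + r1 + r0) * (βm + βn + r1 + r0)) *
        (cm * cn)) ∧
    (∫ ω, Zm ω ∂P = (r1 + βm) / (r0 + r1 + βm) * cm) ∧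
    (∫ ω, Zn ω ∂P = (r1 + βn) / (r0 + r1 + βn) * cn) :=
  stationary_fourier_covariance_general P βm βn r0 r1 cm cn hβm hβn hr0 hr1 τ0 τ1 Zm Zn hτ0meas
    hτ1meas hτ0 hτ1 hττ hZτ hZm2 hZn2 hfix
end
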